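/- Let $s>0$, $\alpha\in(0,1]$ with $s/\alpha>n$, let $Q$ be a cube in $\mathbb{R}^n$ with center $c$ and side length $\ell(Q)$, and let $Q^*$ be the cube with the same center and side length $10\sqrt{n}\,\ell(Q)$. Then for every $j\in\mathbb{Z}$, $\big\|\langle 2^j(\cdot-c)\rangle^{-s}\chi_{(Q^*)^c}\big\|_{L^{1/\alpha}(\mathbb{R}^n)}\approx 2^{-jn\alpha}\min\big(1,(2^j\ell(Q))^{-(s-\alpha n)}\big)$, with implicit constants independent of $j$, $c$, and $\ell(Q)$. -/

import Mathlib

open MeasureTheory Real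

/-- The axis-parallel cube in `ℝⁿ` with center `c` and side length `l`. -/
def cube (n : ℕ) (c : EuclideanSpace ℝ (Fin n)) (l : ℝ) : Set (EuclideanSpace ℝ (Fin n)) :=
  {y | ∀ i, |y i - c i| ≤ l / 2}

/-- `⟨x⟩ = (1 + 4π²|x|²)^{1/2}`. -/
noncomputable def jpBracket (n : ℕ) (x : EuclideanSpace ℝ (Fin n)) : ℝ :=
  Real.sqrt (1 + 4 * π ^ 2 * ‖x‖ ^ 2)

/-!
Substituting `x = 2^j (y - c)` turns the integral into `(2^j)^(-n) F(10√n · 2^j L)`, where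
`F t = ∫_{(cube 0 t)ᶜ} ⟨x⟩^(-σ)` and `σ = s/α > n`. Since `⟨x⟩^(-σ)` is integrable and `F` is
decreasing, `F t ≈ 1` for `t ≤ 1`. For `t ≥ 1` the dilation `x = t y` maps `(cube 0 1)ᶜ` onto
`(cube 0 t)ᶜ`, and off the unit cube `t ⟨y⟩ / 2 ≤ ⟨t y⟩ ≤ t ⟨y⟩`, so `F t ≈ t^(n-σ) F 1`.
Thus `F t ≈ min 1 (t^(n-σ))` on `t > 0`, a comparability (`=Θ[𝓟 (Ioi 0)]`) that survives the
dilation by `10√n` and raising to the power `α`.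
-/

open Set Filter Asymptotics
open scoped Pointwise

section Comparability

variable {ι : Type*} {s : Set ι} {f g : ι → ℝ}

theorem isTheta_principal_iff_of_nonneg (hf : ∀ x ∈ s, 0 ≤ f x) (hg : ∀ x ∈ s, 0 ≤ g x) :
    f =Θ[𝓟 s] g ↔ ∃ C₁ > 0, ∃ C₂ > 0, ∀ x ∈ s, C₁ * g x ≤ f x ∧ f x ≤ C₂ * g x := by
  constructor
  · rintro ⟨hfg, hgf⟩
    obtain ⟨C₂, hC₂, hup⟩ := hfg.exists_pos
    obtain ⟨c, hc, hlow⟩ := hgf.exists_pos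
    rw [isBigOWith_principal] at hup hlow
    refine ⟨c⁻¹, inv_pos.2 hc, C₂, hC₂, fun x hx => ⟨?_, ?_⟩⟩
    · rw [inv_mul_le_iff₀ hc]
      simpa only [norm_of_nonneg (hf x hx), norm_of_nonneg (hg x hx)] using hlow x hx
    · simpa only [norm_of_nonneg (hf x hx), norm_of_nonneg (hg x hx)] using hup x hx
  · rintro ⟨C₁, hC₁, C₂, -, hC⟩
    refine ⟨isBigO_principal.2 ⟨C₂, fun x hx => ?_⟩, isBigO_principal.2 ⟨C₁⁻¹, fun x hx => ?_⟩⟩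
    · simpa only [norm_of_nonneg (hf x hx), norm_of_nonneg (hg x hx)] using (hC x hx).2
    · rw [norm_of_nonneg (hf x hx), norm_of_nonneg (hg x hx), le_inv_mul_iff₀ hC₁]
      exact (hC x hx).1

theorem min_one_mul_min_one_le {c x : ℝ} (hc : 0 ≤ c) (hx : 0 ≤ x) :
    min 1 c * min 1 x ≤ min 1 (c * x) :=
  le_min (mul_le_one₀ (min_le_left _ _) (le_min zero_le_one hx) (min_le_left _ _))
    (mul_le_mul (min_le_right _ _) (min_le_right _ _) (le_min zero_le_one hx) hc)

theorem min_one_mul_le_max_one_mul {c x : ℝ} (hx : 0 ≤ x) :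
    min 1 (c * x) ≤ max 1 c * min 1 x := by
  rcases le_total x 1 with h | h
  · rw [min_eq_right h]
    exact (min_le_right _ _).trans (mul_le_mul_of_nonneg_right (le_max_right _ _) hx)
  · rw [min_eq_left h, mul_one]
    exact (min_le_left _ _).trans (le_max_left _ _)

theorem isTheta_min_one_const_mul {c : ℝ} (hc : 0 < c) (hf : ∀ x ∈ s, 0 ≤ f x) :
    (fun x => min 1 (c * f x)) =Θ[𝓟 s] fun x => min 1 (f x) := by
  refine (isTheta_principal_iff_of_nonneg (fun x hx => le_min zero_le_one
    (mul_nonneg hc.le (hf x hx))) fun x hx => le_min zero_le_one (hf x hx)).2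
    ⟨min 1 c, lt_min one_pos hc, max 1 c, lt_max_of_lt_left one_pos, fun x hx => ⟨?_, ?_⟩⟩
  · exact min_one_mul_min_one_le hc.le (hf x hx)
  · exact min_one_mul_le_max_one_mul (hf x hx)

theorem min_one_rpow {x r : ℝ} (hx : 0 ≤ x) (hr : 0 ≤ r) : min 1 x ^ r = min 1 (x ^ r) := by
  rcases le_total x 1 with h | h
  · rw [min_eq_right h, min_eq_right (rpow_le_one hx h hr)]
  · rw [min_eq_left h, one_rpow, min_eq_left (one_le_rpow h hr)]

end Comparability

variable {n : ℕ}

theorem isClosed_cube (c : EuclideanSpace ℝ (Fin n)) (l : ℝ) : IsClosed (cube n c l) := by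
  simp only [cube, ofPred_forall]
  exact isClosed_iInter fun i => isClosed_le (by fun_prop) continuous_const

theorem cube_mono (c : EuclideanSpace ℝ (Fin n)) {l l' : ℝ} (h : l ≤ l') :
    cube n c l ⊆ cube n c l' :=
  fun _ hy i => (hy i).trans (by linarith)

theorem smul_compl_cube {a : ℝ} (ha : 0 < a) (l : ℝ) :
    a • (cube n 0 l)ᶜ = (cube n 0 (a * l))ᶜ := by
  ext x
  simp only [mem_smul_set_iff_inv_smul_mem₀ ha.ne', mem_compl_iff, cube, mem_ofPred_eq,
    PiLp.smul_apply, PiLp.zero_apply, sub_zero, smul_eq_mul, abs_mul, abs_inv, abs_of_pos ha,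
    inv_mul_le_iff₀ ha, mul_div_assoc]

theorem one_lt_two_mul_norm_of_notMem_cube {x : EuclideanSpace ℝ (Fin n)}
    (hx : x ∉ cube n 0 1) : 1 < 2 * ‖x‖ := by
  simp only [cube, mem_ofPred_eq, PiLp.zero_apply, sub_zero, not_forall, not_le] at hx
  obtain ⟨i, hi⟩ := hx
  have := PiLp.norm_apply_le x i
  rw [Real.norm_eq_abs] at this
  linarith

section ChangeOfVariables

variable {F : Type*} [NormedAddCommGroup F] [NormedSpace ℝ F]

theorem setIntegral_compl_cube_comp_sub_right (g : EuclideanSpace ℝ (Fin n) → F)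
    (c : EuclideanSpace ℝ (Fin n)) (l : ℝ) :
    ∫ y in (cube n c l)ᶜ, g (y - c) = ∫ x in (cube n 0 l)ᶜ, g x := by
  have : (cube n c l)ᶜ = (· - c) ⁻¹' (cube n 0 l)ᶜ := by ext y; simp [cube]
  rw [this, (measurePreserving_sub_right volume c).setIntegral_preimage_emb
    (measurableEmbedding_subRight c)]

theorem setIntegral_compl_cube_comp_smul (g : EuclideanSpace ℝ (Fin n) → F) {a : ℝ} (ha : 0 < a)
    (l : ℝ) :
    ∫ y in (cube n 0 l)ᶜ, g (a • y) = (a ^ n)⁻¹ • ∫ x in (cube n 0 (a * l))ᶜ, g x := by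
  rw [Measure.setIntegral_comp_smul_of_pos _ _ _ ha, smul_compl_cube ha,
    finrank_euclideanSpace_fin]

end ChangeOfVariables

theorem jpBracket_pos (x : EuclideanSpace ℝ (Fin n)) : 0 < jpBracket n x :=
  Real.sqrt_pos.2 (by positivity)

theorem jpBracket_rpow_neg_nonneg (σ : ℝ) (x : EuclideanSpace ℝ (Fin n)) :
    0 ≤ jpBracket n x ^ (-σ) :=
  rpow_nonneg (jpBracket_pos x).le _

theorem jpBracket_sq (x : EuclideanSpace ℝ (Fin n)) :
    jpBracket n x ^ 2 = 1 + 4 * π ^ 2 * ‖x‖ ^ 2 :=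
  Real.sq_sqrt (by positivity)

theorem jpBracket_smul_le {t : ℝ} (ht : 1 ≤ t) (x : EuclideanSpace ℝ (Fin n)) :
    jpBracket n (t • x) ≤ t * jpBracket n x := by
  rw [← sq_le_sq₀ (jpBracket_pos _).le (by nlinarith [jpBracket_pos x]), mul_pow,
    jpBracket_sq, jpBracket_sq, norm_smul, norm_of_nonneg (by linarith)]
  nlinarith [sq_nonneg ‖x‖, sq_nonneg π]

theorem mul_jpBracket_le_two_mul_jpBracket_smul {t : ℝ} (ht : 1 ≤ t)
    {x : EuclideanSpace ℝ (Fin n)} (hx : 1 ≤ 2 * ‖x‖) :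
    t * jpBracket n x ≤ 2 * jpBracket n (t • x) := by
  rw [← sq_le_sq₀ (by nlinarith [jpBracket_pos x]) (by nlinarith [jpBracket_pos (t • x)]),
    mul_pow, mul_pow, jpBracket_sq, jpBracket_sq, norm_smul, norm_of_nonneg (by linarith)]
  have hπ : 1 ≤ π ^ 2 := by nlinarith [pi_gt_three]
  have h1 : 1 ≤ 4 * π ^ 2 * ‖x‖ ^ 2 := by nlinarith
  nlinarith [mul_le_mul_of_nonneg_left h1 (sq_nonneg t)]

theorem integrable_jpBracket_rpow_neg {σ : ℝ} (hσ : n < σ) :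
    Integrable fun x : EuclideanSpace ℝ (Fin n) => jpBracket n x ^ (-σ) := by
  have h : ∀ x : EuclideanSpace ℝ (Fin n),
      jpBracket n x ^ (-σ) = (1 + ‖(2 * π) • x‖ ^ 2) ^ (-σ / 2) := fun x => by
    rw [jpBracket, sqrt_eq_rpow, ← rpow_mul (by positivity), norm_smul,
      norm_of_nonneg (by positivity), mul_pow]
    ring_nf
  simp only [h]
  exact (integrable_rpow_neg_one_add_norm_sq (by rwa [finrank_euclideanSpace_fin])).comp_smul
    (by positivity)

noncomputable def jpBracketTail (n : ℕ) (σ t : ℝ) : ℝ :=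
  ∫ x in (cube n 0 t)ᶜ, jpBracket n x ^ (-σ)

section Tail

variable {σ : ℝ}

theorem jpBracketTail_nonneg (σ t : ℝ) : 0 ≤ jpBracketTail n σ t :=
  setIntegral_nonneg (isClosed_cube 0 t).isOpen_compl.measurableSet
    fun x _ => jpBracket_rpow_neg_nonneg σ x

theorem jpBracketTail_le_integral (hσ : n < σ) (t : ℝ) :
    jpBracketTail n σ t ≤ ∫ x, jpBracket n x ^ (-σ) :=
  setIntegral_le_integral (integrable_jpBracket_rpow_neg hσ)
    (Eventually.of_forall (jpBracket_rpow_neg_nonneg σ))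

theorem jpBracketTail_antitone (hσ : n < σ) : Antitone (jpBracketTail n σ) := fun _ _ h =>
  setIntegral_mono_set (integrable_jpBracket_rpow_neg hσ).integrableOn
    (Eventually.of_forall (jpBracket_rpow_neg_nonneg σ))
    (compl_subset_compl.2 (cube_mono 0 h)).eventuallyLE

theorem jpBracketTail_one_pos (hn : 0 < n) (hσ : n < σ) : 0 < jpBracketTail n σ 1 := by
  rw [jpBracketTail, setIntegral_pos_iff_support_of_nonneg_ae
    (Eventually.of_forall (jpBracket_rpow_neg_nonneg σ))
    (integrable_jpBracket_rpow_neg hσ).integrableOn]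
  have hsupp : Function.support (fun x => jpBracket n x ^ (-σ)) = univ :=
    Function.support_eq_univ fun x => (rpow_pos_of_pos (jpBracket_pos x) _).ne'
  rw [hsupp, univ_inter]
  refine (isClosed_cube 0 1).isOpen_compl.measure_pos volume ⟨EuclideanSpace.single ⟨0, hn⟩ 1, fun h => ?_⟩
  have := h ⟨0, hn⟩
  norm_num at this

theorem jpBracketTail_eq_rpow_mul_setIntegral_smul (σ : ℝ) {t : ℝ} (ht : 0 < t) :
    jpBracketTail n σ t = t ^ (n : ℝ) * ∫ y in (cube n 0 1)ᶜ, jpBracket n (t • y) ^ (-σ) := by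
  rw [setIntegral_compl_cube_comp_smul (fun x => jpBracket n x ^ (-σ)) ht, mul_one, smul_eq_mul,
    rpow_natCast, mul_inv_cancel_left₀ (pow_pos ht n).ne', jpBracketTail]

theorem rpow_neg_mul_jpBracket_rpow_neg_le (hσ : 0 ≤ σ) {t : ℝ} (ht : 1 ≤ t)
    (y : EuclideanSpace ℝ (Fin n)) :
    t ^ (-σ) * jpBracket n y ^ (-σ) ≤ jpBracket n (t • y) ^ (-σ) := by
  rw [← mul_rpow (by linarith) (jpBracket_pos y).le]
  exact rpow_le_rpow_of_nonpos (jpBracket_pos _) (jpBracket_smul_le ht y) (by linarith)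

theorem jpBracket_smul_rpow_neg_le (hσ : 0 ≤ σ) {t : ℝ} (ht : 1 ≤ t)
    {y : EuclideanSpace ℝ (Fin n)} (hy : 1 ≤ 2 * ‖y‖) :
    jpBracket n (t • y) ^ (-σ) ≤ 2 ^ σ * t ^ (-σ) * jpBracket n y ^ (-σ) := by
  have hty : 0 < t * jpBracket n y := mul_pos (by linarith) (jpBracket_pos y)
  calc jpBracket n (t • y) ^ (-σ) ≤ (t * jpBracket n y / 2) ^ (-σ) :=
        rpow_le_rpow_of_nonpos (by positivity)
          (by linarith [mul_jpBracket_le_two_mul_jpBracket_smul ht hy]) (by linarith)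
    _ = 2 ^ σ * t ^ (-σ) * jpBracket n y ^ (-σ) := by
        rw [div_rpow hty.le zero_le_two, mul_rpow (by linarith) (jpBracket_pos y).le,
          rpow_neg zero_le_two, div_inv_eq_mul]
        ring

theorem jpBracketTail_bounds_of_one_le (hσ : n < σ) {t : ℝ} (ht : 1 ≤ t) :
    t ^ ((n : ℝ) - σ) * jpBracketTail n σ 1 ≤ jpBracketTail n σ t ∧
      jpBracketTail n σ t ≤ 2 ^ σ * t ^ ((n : ℝ) - σ) * jpBracketTail n σ 1 := by
  have ht0 : 0 < t := zero_lt_one.trans_le ht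
  have hσ0 : 0 ≤ σ := (Nat.cast_nonneg n).trans hσ.le
  have hint := integrable_jpBracket_rpow_neg hσ
  have hmeas := (isClosed_cube (0 : EuclideanSpace ℝ (Fin n)) 1).isOpen_compl.measurableSet
  have hpow : t ^ ((n : ℝ) - σ) = t ^ (n : ℝ) * t ^ (-σ) := by
    rw [← rpow_add ht0, sub_eq_add_neg]
  have hlow : t ^ (-σ) * jpBracketTail n σ 1 ≤
      ∫ y in (cube n 0 1)ᶜ, jpBracket n (t • y) ^ (-σ) := by
    rw [jpBracketTail, ← integral_const_mul]
    exact setIntegral_mono_on (hint.integrableOn.const_mul _)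
      (hint.comp_smul ht0.ne').integrableOn hmeas
      fun y _ => rpow_neg_mul_jpBracket_rpow_neg_le hσ0 ht y
  have hup : ∫ y in (cube n 0 1)ᶜ, jpBracket n (t • y) ^ (-σ) ≤
      2 ^ σ * t ^ (-σ) * jpBracketTail n σ 1 := by
    rw [jpBracketTail, ← integral_const_mul]
    exact setIntegral_mono_on (hint.comp_smul ht0.ne').integrableOn
      (hint.integrableOn.const_mul _) hmeas
      fun y hy => jpBracket_smul_rpow_neg_le hσ0 ht (one_lt_two_mul_norm_of_notMem_cube hy).le
  rw [jpBracketTail_eq_rpow_mul_setIntegral_smul σ ht0, hpow]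
  constructor
  · rw [mul_assoc]
    gcongr
  · calc _ ≤ t ^ (n : ℝ) * (2 ^ σ * t ^ (-σ) * jpBracketTail n σ 1) := by gcongr
      _ = _ := by ring

theorem jpBracketTail_isTheta (hn : 0 < n) (hσ : n < σ) :
    jpBracketTail n σ =Θ[𝓟 (Ioi 0)] fun t => min 1 (t ^ ((n : ℝ) - σ)) := by
  have hβ : (n : ℝ) - σ ≤ 0 := by linarith
  have hF1 := jpBracketTail_one_pos hn hσ
  refine (isTheta_principal_iff_of_nonneg (fun t _ => jpBracketTail_nonneg σ t)
    fun t ht => le_min zero_le_one (rpow_nonneg (le_of_lt ht) _)).2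
    ⟨jpBracketTail n σ 1, hF1, max (∫ x, jpBracket n x ^ (-σ)) (2 ^ σ * jpBracketTail n σ 1),
      lt_max_of_lt_right (by positivity), fun t (ht : 0 < t) => ?_⟩
  rcases le_total t 1 with h | h
  · rw [min_eq_left (one_le_rpow_of_pos_of_le_one_of_nonpos ht h hβ), mul_one, mul_one]
    exact ⟨jpBracketTail_antitone hσ h,
      (jpBracketTail_le_integral hσ t).trans (le_max_left _ _)⟩
  · rw [min_eq_right (rpow_le_one_of_one_le_of_nonpos h hβ)]
    obtain ⟨hlow, hup⟩ := jpBracketTail_bounds_of_one_le hσ h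
    refine ⟨by linarith, hup.trans ?_⟩
    rw [mul_right_comm]
    gcongr
    exact le_max_right _ _

theorem jpBracketTail_dilate_rpow_isTheta (hn : 0 < n) (hσ : n < σ) {d α : ℝ} (hd : 0 < d)
    (hα : 0 ≤ α) :
    (fun u => jpBracketTail n σ (d * u) ^ α) =Θ[𝓟 (Ioi 0)]
      fun u => min 1 (u ^ (((n : ℝ) - σ) * α)) := by
  have hk : Tendsto (d * ·) (𝓟 (Ioi 0)) (𝓟 (Ioi 0)) :=
    tendsto_principal_principal.2 fun u (hu : 0 < u) => mul_pos hd hu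
  have hdilate : (fun u => jpBracketTail n σ (d * u)) =Θ[𝓟 (Ioi 0)]
      fun u => min 1 ((d * u) ^ ((n : ℝ) - σ)) :=
    have h := jpBracketTail_isTheta hn hσ
    ⟨h.1.comp_tendsto hk, h.2.comp_tendsto hk⟩
  have hconst := isTheta_min_one_const_mul (s := Ioi 0) (rpow_pos_of_pos hd ((n : ℝ) - σ))
    (f := fun u => u ^ ((n : ℝ) - σ)) fun u hu => rpow_nonneg (le_of_lt hu) _
  have hsplit : (fun u => min 1 ((d * u) ^ ((n : ℝ) - σ))) =ᶠ[𝓟 (Ioi 0)]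
      fun u => min 1 (d ^ ((n : ℝ) - σ) * u ^ ((n : ℝ) - σ)) :=
    eventually_principal.2 fun u (hu : 0 < u) => by beta_reduce; rw [mul_rpow hd.le hu.le]
  refine ((hdilate.trans (hsplit.trans_isTheta hconst)).rpow
    (eventually_principal.2 fun _ _ => jpBracketTail_nonneg σ _)
    (eventually_principal.2 fun u (hu : 0 < u) => le_min zero_le_one (rpow_nonneg hu.le _))
    ).trans_eventuallyEq (eventually_principal.2 fun u (hu : 0 < u) => ?_)
  beta_reduce
  rw [min_one_rpow (rpow_nonneg hu.le _) hα, rpow_mul hu.le]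

end Tail

theorem weighted_norm_outside_cube_general (n : ℕ) (hn : 0 < n) (s α : ℝ)
    (hα0 : 0 < α) (hsα : (n : ℝ) < s / α) :
    ∃ C₁ > 0, ∃ C₂ > 0, ∀ (c : EuclideanSpace ℝ (Fin n)) (L : ℝ), 0 < L → ∀ j : ℤ,
      C₁ * (((2 : ℝ) ^ j) ^ (-((n : ℝ) * α)) *
          min 1 (((2 : ℝ) ^ j * L) ^ (-(s - α * n)))) ≤
        (∫ y in (cube n c (10 * Real.sqrt n * L))ᶜ,
            (jpBracket n ((2 : ℝ) ^ j • (y - c))) ^ (-(s / α))) ^ α ∧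
      (∫ y in (cube n c (10 * Real.sqrt n * L))ᶜ,
          (jpBracket n ((2 : ℝ) ^ j • (y - c))) ^ (-(s / α))) ^ α ≤
        C₂ * (((2 : ℝ) ^ j) ^ (-((n : ℝ) * α)) *
          min 1 (((2 : ℝ) ^ j * L) ^ (-(s - α * n)))) := by
  have hd : 0 < 10 * Real.sqrt n := by positivity
  have hexp : ((n : ℝ) - s / α) * α = -(s - α * n) := by field_simp; ring
  obtain ⟨C₁, hC₁, C₂, hC₂, hC⟩ := (isTheta_principal_iff_of_nonneg
    (fun _ _ => rpow_nonneg (jpBracketTail_nonneg _ _) _)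
    fun u (hu : 0 < u) => le_min zero_le_one (rpow_nonneg hu.le _)).1
    (jpBracketTail_dilate_rpow_isTheta hn hsα hd hα0.le)
  refine ⟨C₁, hC₁, C₂, hC₂, fun c L hL j => ?_⟩
  have ha : 0 < (2 : ℝ) ^ j := zpow_pos two_pos j
  rw [setIntegral_compl_cube_comp_sub_right (fun x => jpBracket n ((2 : ℝ) ^ j • x) ^ (-(s / α))),
    setIntegral_compl_cube_comp_smul (fun x => jpBracket n x ^ (-(s / α))) ha, smul_eq_mul,
    ← jpBracketTail, mul_left_comm _ (10 * √n), mul_rpow (by positivity) (jpBracketTail_nonneg _ _),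
    inv_rpow (by positivity), ← rpow_natCast, ← rpow_mul ha.le, ← rpow_neg (by positivity),
    ← hexp]
  obtain ⟨hlow, hup⟩ := hC _ (mul_pos ha hL)
  constructor
  · rw [mul_left_comm]
    gcongr
  · rw [mul_left_comm C₂]
    gcongr

/-- Let `s > 0`, `α ∈ (0,1]` with `s/α > n`, `Q` a cube with center `c` and side `ℓ(Q)`, and
`Q*` its concentric dilate by `10√n`. Then for all `j ∈ ℤ`,
`‖⟨2^j(·-c)⟩^{-s} χ_{(Q*)ᶜ}‖_{L^{1/α}} ≈ 2^{-jnα} min(1, (2^j ℓ(Q))^{-(s-αn)})`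
with implicit constants independent of `j`, `c`, `ℓ(Q)`. -/
theorem weighted_norm_outside_cube (n : ℕ) (hn : 0 < n) (s α : ℝ) (hs : 0 < s)
    (hα0 : 0 < α) (hα1 : α ≤ 1) (hsα : (n : ℝ) < s / α) :
    ∃ C₁ > 0, ∃ C₂ > 0, ∀ (c : EuclideanSpace ℝ (Fin n)) (L : ℝ), 0 < L → ∀ j : ℤ,
      C₁ * (((2 : ℝ) ^ j) ^ (-((n : ℝ) * α)) *
          min 1 (((2 : ℝ) ^ j * L) ^ (-(s - α * n)))) ≤
        (∫ y in (cube n c (10 * Real.sqrt n * L))ᶜ,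
            (jpBracket n ((2 : ℝ) ^ j • (y - c))) ^ (-(s / α))) ^ α ∧
      (∫ y in (cube n c (10 * Real.sqrt n * L))ᶜ,
          (jpBracket n ((2 : ℝ) ^ j • (y - c))) ^ (-(s / α))) ^ α ≤
        C₂ * (((2 : ℝ) ^ j) ^ (-((n : ℝ) * α)) *
          min 1 (((2 : ℝ) ^ j * L) ^ (-(s - α * n)))) :=
  weighted_norm_outside_cube_general n hn s α hα0 hsα
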